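/- arXiv:2501.03951 — 6 statements merged into one kernel-verified Lean document; each statement's English description precedes it below -/
import Mathlib

section
/- For every real number φ with −π ≤ φ ≤ π, one has 2·(1 + cos φ) ≤ 4·exp(−φ²/4). Equivalently, writing f(z) := log(2 + z + z⁻¹), for every φ ∈ (−π, π) one has Re f(e^{iφ}) = log(2(1+cos φ)) ≤ log 4 − φ²/4. -/
/-!
Since `2 (1 + cos φ) = 4 cos² (φ/2)`, it suffices that `cos x ≤ exp (-x²/2)` for `|x| ≤ 2`.
Writing `cos x = 1 - 2 sin² (x/2)` and using `sin t ≥ t - t³/6` gives `cos x ≤ (1 - x²/4)²`,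
and `1 - t ≤ exp (-t)` finishes.
-/

open Real

lemma Real.cos_le_one_sub_sq_div_four_sq {x : ℝ} (hx : |x| ≤ 4) :
    cos x ≤ (1 - x ^ 2 / 4) ^ 2 := by
  rw [← cos_abs, ← sq_abs x]
  set y := |x| / 2 with hy
  have hy0 : 0 ≤ y := by positivity
  have hy2 : y ≤ 2 := by rw [hy]; linarith
  have hsin : y - y ^ 3 / 6 ≤ sin y := sin_ge_sub_cube hy0
  have hsin0 : 0 ≤ y - y ^ 3 / 6 := by
    nlinarith [mul_nonneg hy0 (show 0 ≤ 6 - y ^ 2 by nlinarith)]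
  have hcos : cos |x| = 1 - 2 * sin y ^ 2 := by
    rw [show |x| = 2 * y by rw [hy]; ring, cos_two_mul, cos_sq']
    ring
  have hsq : (y - y ^ 3 / 6) ^ 2 ≤ sin y ^ 2 := pow_le_pow_left₀ hsin0 hsin 2
  rw [hcos, show |x| ^ 2 / 4 = y ^ 2 by rw [hy]; ring]
  nlinarith [pow_nonneg hy0 6]

lemma Real.cos_le_exp_neg_sq_div_two {x : ℝ} (hx : |x| ≤ 2) :
    cos x ≤ exp (-x ^ 2 / 2) := by
  have hx2 : x ^ 2 ≤ 4 := by nlinarith [sq_abs x, abs_nonneg x]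
  calc cos x ≤ (1 - x ^ 2 / 4) ^ 2 := cos_le_one_sub_sq_div_four_sq (by linarith)
    _ ≤ exp (-(x ^ 2 / 4)) ^ 2 :=
        pow_le_pow_left₀ (by linarith) (by linarith [add_one_le_exp (-(x ^ 2 / 4))]) 2
    _ = exp (-x ^ 2 / 2) := by rw [← exp_nat_mul]; congr 1; push_cast; ring

/-- For every real `φ` with `-π ≤ φ ≤ π`, one has `2·(1 + cos φ) ≤ 4·exp(-φ²/4)`. -/
theorem stmt0 (φ : ℝ) (h1 : -Real.pi ≤ φ) (h2 : φ ≤ Real.pi) :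
    2 * (1 + Real.cos φ) ≤ 4 * Real.exp (-φ ^ 2 / 4) := by
  have hcos_nonneg : 0 ≤ cos (φ / 2) :=
    cos_nonneg_of_neg_pi_div_two_le_of_le (by linarith) (by linarith)
  have hcos_le : cos (φ / 2) ≤ exp (-(φ / 2) ^ 2 / 2) :=
    cos_le_exp_neg_sq_div_two (abs_le.2 ⟨by linarith [pi_le_four], by linarith [pi_le_four]⟩)
  calc 2 * (1 + cos φ) = 4 * cos (φ / 2) ^ 2 := by
        rw [cos_sq, show 2 * (φ / 2) = φ by ring]; ring
    _ ≤ 4 * exp (-(φ / 2) ^ 2 / 2) ^ 2 := by gcongr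
    _ = 4 * exp (-φ ^ 2 / 4) := by rw [← exp_nat_mul]; congr 2; push_cast; ring
end

section
/- Let q ∈ (0,1) be real and let w ∈ ℂ satisfy |1 − w| ≤ (1−q)/2. Then there exists θ ∈ ℂ with |θ| ≤ 2·|1−w|·q/(1−q)² such that (q·w; q)_∞ = e^θ · (q; q)_∞, i.e. ∏_{n=0}^∞ (1 − w·q^{n+1}) = e^θ · ∏_{n=0}^∞ (1 − q^{n+1}). -/
/-!
Factor `1 - w qⁿ⁺¹ = (1 + zₙ)(1 - qⁿ⁺¹)` with `zₙ = (1 - w) qⁿ⁺¹ / (1 - qⁿ⁺¹)`. Since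
`|zₙ| ≤ |1 - w| qⁿ⁺¹ / (1 - q) ≤ 1/2`, the logarithms `log (1 + zₙ)` are bounded by `3/2 |zₙ|`,
so `θ = ∑ log (1 + zₙ)` converges with `|θ| ≤ 3/2 · |1 - w| q / (1 - q)²`, and `e^θ = ∏ (1 + zₙ)`.
-/

open Complex

lemma one_sub_mul_eq_one_add_div_mul_one_sub {K : Type*} [Field K] (w : K) {x : K}
    (hx : x ≠ 1) : 1 - w * x = (1 + (1 - w) * x / (1 - x)) * (1 - x) := by
  have : 1 - x ≠ 0 := sub_ne_zero.mpr hx.symm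
  field_simp
  ring

lemma norm_mul_div_one_sub_le {K : Type*} [NormedField K] (c : K) {x : K} {r : ℝ}
    (hx : ‖x‖ ≤ r) (hr : r < 1) : ‖c * x / (1 - x)‖ ≤ ‖c‖ * ‖x‖ / (1 - r) := by
  have h1x : 1 - r ≤ ‖1 - x‖ := by
    have := norm_sub_norm_le (1 : K) x
    rw [norm_one] at this
    linarith
  rw [norm_div, norm_mul]
  exact div_le_div_of_nonneg_left (by positivity) (by linarith) h1x

lemma Complex.exists_norm_le_hasProd_one_add {ι : Type*} {z : ι → ℂ}
    (hz : ∀ i, ‖z i‖ ≤ 1 / 2) (hs : Summable fun i => ‖z i‖) :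
    ∃ θ : ℂ, ‖θ‖ ≤ 3 / 2 * ∑' i, ‖z i‖ ∧ HasProd (fun i => 1 + z i) (exp θ) := by
  have hlog : Summable fun i => log (1 + z i) := summable_log_one_add_of_summable hs.of_norm
  have hne : ∀ i, 1 + z i ≠ 0 := fun i h => by
    have := hz i
    rw [eq_neg_of_add_eq_zero_right h, norm_neg, norm_one] at this
    norm_num at this
  refine ⟨∑' i, log (1 + z i), ?_, hasProd_of_hasSum_log hne hlog.hasSum⟩
  calc ‖∑' i, log (1 + z i)‖ ≤ ∑' i, ‖log (1 + z i)‖ := norm_tsum_le_tsum_norm hlog.norm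
    _ ≤ ∑' i, 3 / 2 * ‖z i‖ :=
      hlog.norm.tsum_le_tsum (fun i => norm_log_one_add_half_le_self (hz i)) (hs.mul_left _)
    _ = 3 / 2 * ∑' i, ‖z i‖ := tsum_mul_left

lemma Complex.norm_ofReal_pow_succ_le {q : ℝ} (hq0 : 0 ≤ q) (hq1 : q ≤ 1) (n : ℕ) :
    ‖(q : ℂ) ^ (n + 1)‖ ≤ q := by
  rw [norm_pow, norm_real, Real.norm_of_nonneg hq0]
  exact pow_le_of_le_one hq0 hq1 n.succ_ne_zero

lemma Complex.norm_mul_pow_succ_div_le (c : ℂ) {q : ℝ} (hq0 : 0 ≤ q) (hq1 : q < 1) (n : ℕ) :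
    ‖c * (q : ℂ) ^ (n + 1) / (1 - (q : ℂ) ^ (n + 1))‖ ≤ ‖c‖ * q / (1 - q) * q ^ n := by
  refine (norm_mul_div_one_sub_le c (norm_ofReal_pow_succ_le hq0 hq1.le n) hq1).trans_eq ?_
  rw [norm_pow, norm_real, Real.norm_of_nonneg hq0]
  ring

lemma Complex.multipliable_one_sub_pow_succ {q : ℂ} (hq : ‖q‖ < 1) :
    Multipliable fun n : ℕ => 1 - q ^ (n + 1) := by
  have hs : Summable fun n : ℕ => -q ^ (n + 1) := by
    simpa [pow_succ'] using (summable_geometric_of_norm_lt_one hq).mul_left (-q)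
  simpa [sub_eq_add_neg] using Complex.multipliable_one_add_of_summable hs

/-- If `q ∈ (0,1)` and `|1-w| ≤ (1-q)/2`, then
`(qw;q)_∞ = e^θ (q;q)_∞` for some `θ` with `|θ| ≤ 2|1-w|q/(1-q)²`. -/
theorem stmt2 (q : ℝ) (hq0 : 0 < q) (hq1 : q < 1) (w : ℂ)
    (hw : ‖1 - w‖ ≤ (1 - q) / 2) :
    ∃ θ : ℂ, ‖θ‖ ≤ 2 * ‖1 - w‖ * q / (1 - q) ^ 2 ∧
      (∏' n : ℕ, (1 - w * (q : ℂ) ^ (n + 1))) =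
        Complex.exp θ * ∏' n : ℕ, (1 - (q : ℂ) ^ (n + 1)) := by
  set a := ‖1 - w‖
  set z : ℕ → ℂ := fun n => (1 - w) * (q : ℂ) ^ (n + 1) / (1 - (q : ℂ) ^ (n + 1))
  have hz : ∀ n, ‖z n‖ ≤ a * q / (1 - q) * q ^ n := norm_mul_pow_succ_div_le _ hq0.le hq1
  have hgeom : HasSum (fun n : ℕ => a * q / (1 - q) * q ^ n) (a * q / (1 - q) * (1 - q)⁻¹) :=
    (hasSum_geometric_of_lt_one hq0.le hq1).mul_left _
  have hzs : Summable fun n => ‖z n‖ :=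
    hgeom.summable.of_nonneg_of_le (fun _ => norm_nonneg _) hz
  have hz_half : ∀ n, ‖z n‖ ≤ 1 / 2 := fun n => by
    have hc : a / (1 - q) ≤ 1 / 2 := by rw [div_le_iff₀ (by linarith)]; linarith
    have hqn : q * q ^ n ≤ 1 := by
      simpa [← pow_succ'] using pow_le_one₀ hq0.le hq1.le (n := n + 1)
    calc ‖z n‖ ≤ a / (1 - q) * (q * q ^ n) := (hz n).trans_eq (by ring)
      _ ≤ 1 / 2 * 1 := by gcongr
      _ = 1 / 2 := mul_one _
  obtain ⟨θ, hθ, hprod⟩ := exists_norm_le_hasProd_one_add hz_half hzs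
  refine ⟨θ, ?_, ?_⟩
  · have haq : 0 ≤ a * q := mul_nonneg (norm_nonneg _) hq0.le
    calc ‖θ‖ ≤ 3 / 2 * ∑' n, ‖z n‖ := hθ
      _ ≤ 3 / 2 * (a * q / (1 - q) * (1 - q)⁻¹) := by
        gcongr
        exact hasSum_le hz hzs.hasSum hgeom
      _ = 3 / 2 * (a * q) / (1 - q) ^ 2 := by field_simp
      _ ≤ 2 * a * q / (1 - q) ^ 2 := div_le_div_of_nonneg_right (by linarith) (sq_nonneg _)
  · have hpow_ne : ∀ n : ℕ, (q : ℂ) ^ (n + 1) ≠ 1 := fun n h => by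
      simpa [h] using (norm_ofReal_pow_succ_le hq0.le hq1.le n).trans_lt hq1
    have hmul := multipliable_one_sub_pow_succ (q := (q : ℂ)) (by simpa [abs_of_pos hq0])
    rw [← hprod.tprod_eq, ← hprod.multipliable.tprod_mul hmul]
    exact tprod_congr fun n => one_sub_mul_eq_one_add_div_mul_one_sub w (hpow_ne n)
end

section
/- Let q ∈ (0,1) be real, let a ∈ ℂ with |a| ≤ 1, let φ ∈ ℝ, and set z := e^{iφ}. Then |(a·z; q)_∞ · (a·z^{−1}; q)_∞| ≥ ((|a|; q)_∞)² ≥ (1 − |a|)² · ((q; q)_∞)². (With a = A ∈ [0,1] this is the lower bound of Lemma lemAN, |(Az, Az^{−1};q)_∞| ≥ ((A,q)_∞)² ≥ (1−A)²((q;q)_∞)²; with a = B ∈ [−1,0] it gives the lower bound of Lemma lemBN.) -/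
/-! Each factor satisfies `‖1 - c qᵏ‖ ≥ 1 - ‖c‖ qᵏ` by the reverse triangle inequality, and
`‖a z‖ = ‖a z⁻¹‖ = ‖a‖` on the unit circle, which gives the bound by `((‖a‖; q)_∞)²`. Splitting off
the factor `1 - ‖a‖` at `k = 0` and comparing `1 - ‖a‖ qᵏ⁺¹ ≥ 1 - qᵏ⁺¹` termwise gives the other. -/

section NormedField

variable {𝕜 : Type*} [NormedField 𝕜] [CompleteSpace 𝕜]

theorem multipliable_one_sub_mul_pow {q : 𝕜} (hq : ‖q‖ < 1) (c : 𝕜) :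
    Multipliable fun k : ℕ => 1 - c * q ^ k := by
  have hsum : Summable fun k : ℕ => ‖-(c * q ^ k)‖ := by
    simpa only [norm_neg, norm_mul, norm_pow] using
      (summable_geometric_of_lt_one (norm_nonneg q) hq).mul_left ‖c‖
  simpa only [sub_eq_add_neg] using multipliable_one_add_of_summable hsum

theorem tprod_le_tprod_of_nonneg {ι : Type*} {f g : ι → ℝ} (hf0 : ∀ i, 0 ≤ f i)
    (hfg : ∀ i, f i ≤ g i) (hf : Multipliable f) (hg : Multipliable g) :
    ∏' i, f i ≤ ∏' i, g i :=
  le_of_tendsto_of_tendsto' hf.hasProd hg.hasProd fun _ =>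
    Finset.prod_le_prod (fun i _ => hf0 i) fun i _ => hfg i

theorem tprod_one_sub_norm_mul_pow_le_norm_tprod {q : 𝕜} (hq : ‖q‖ < 1) {c : 𝕜} (hc : ‖c‖ ≤ 1) :
    ∏' k : ℕ, (1 - ‖c‖ * ‖q‖ ^ k) ≤ ‖∏' k : ℕ, (1 - c * q ^ k)‖ := by
  have hq' : ‖‖q‖‖ < 1 := by rwa [norm_norm]
  rw [(multipliable_one_sub_mul_pow hq c).norm_tprod]
  refine tprod_le_tprod_of_nonneg (fun k => ?_) (fun k => ?_)
    (multipliable_one_sub_mul_pow hq' ‖c‖) (multipliable_one_sub_mul_pow hq c).norm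
  · exact sub_nonneg.2 (mul_le_one₀ hc (by positivity) (pow_le_one₀ (norm_nonneg q) hq.le))
  · simpa only [norm_one, norm_mul, norm_pow] using norm_sub_norm_le (1 : 𝕜) (c * q ^ k)

end NormedField

theorem one_sub_mul_tprod_one_sub_pow_succ_le {q r : ℝ} (hq0 : 0 ≤ q) (hq1 : q < 1)
    (hr1 : r ≤ 1) :
    (1 - r) * ∏' k : ℕ, (1 - q ^ (k + 1)) ≤ ∏' k : ℕ, (1 - r * q ^ k) := by
  have hq : ‖q‖ < 1 := by rwa [Real.norm_of_nonneg hq0]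
  have hmul : Multipliable fun k : ℕ => 1 - q ^ (k + 1) := by
    simpa only [pow_succ'] using multipliable_one_sub_mul_pow hq q
  have hmul_r : Multipliable fun k : ℕ => 1 - r * q ^ (k + 1) := by
    simpa only [pow_succ', mul_assoc] using multipliable_one_sub_mul_pow hq (r * q)
  rw [tprod_eq_zero_mul' (f := fun k => 1 - r * q ^ k) hmul_r, pow_zero, mul_one]
  refine mul_le_mul_of_nonneg_left (tprod_le_tprod_of_nonneg (fun k => ?_) (fun k => ?_)
    hmul hmul_r) (sub_nonneg.2 hr1)
  · exact sub_nonneg.2 (pow_le_one₀ hq0 hq1.le)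
  · exact sub_le_sub_left (mul_le_of_le_one_left (by positivity) hr1) 1

/-- For `q ∈ (0,1)`, `|a| ≤ 1` and `z = e^{iφ}`:
`|(az, az⁻¹; q)_∞| ≥ ((|a|;q)_∞)² ≥ (1-|a|)² ((q;q)_∞)²`. -/
theorem stmt5 (q : ℝ) (hq0 : 0 < q) (hq1 : q < 1) (a : ℂ) (ha : ‖a‖ ≤ 1) (φ : ℝ) :
    (1 - ‖a‖) ^ 2 * (∏' k : ℕ, (1 - q ^ (k + 1))) ^ 2
        ≤ (∏' k : ℕ, (1 - ‖a‖ * q ^ k)) ^ 2 ∧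
      (∏' k : ℕ, (1 - ‖a‖ * q ^ k)) ^ 2 ≤
        ‖((∏' k : ℕ, (1 - a * Complex.exp ((φ : ℂ) * Complex.I) * (q : ℂ) ^ k)) *
          ∏' k : ℕ, (1 - a * (Complex.exp ((φ : ℂ) * Complex.I))⁻¹ * (q : ℂ) ^ k))‖ := by
  have hz : ‖Complex.exp ((φ : ℂ) * Complex.I)‖ = 1 := Complex.norm_exp_ofReal_mul_I φ
  have hq : ‖(q : ℂ)‖ = q := by rw [Complex.norm_real, Real.norm_of_nonneg hq0.le]
  have hpoch_nonneg : 0 ≤ ∏' k : ℕ, (1 - ‖a‖ * q ^ k) :=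
    tprod_nonneg fun k => sub_nonneg.2 (mul_le_one₀ ha (by positivity) (pow_le_one₀ hq0.le hq1.le))
  have hpoch_le_norm (c : ℂ) (hc : ‖c‖ = ‖a‖) :
      ∏' k : ℕ, (1 - ‖a‖ * q ^ k) ≤ ‖∏' k : ℕ, (1 - c * (q : ℂ) ^ k)‖ := by
    have h := tprod_one_sub_norm_mul_pow_le_norm_tprod (by rwa [hq]) (hc.trans_le ha)
    rwa [hc, hq] at h
  constructor
  · rw [← mul_pow]
    refine pow_le_pow_left₀ (mul_nonneg (sub_nonneg.2 ha) ?_)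
      (one_sub_mul_tprod_one_sub_pow_succ_le hq0.le hq1 ha) 2
    exact tprod_nonneg fun k => sub_nonneg.2 (pow_le_one₀ hq0.le hq1.le)
  · rw [norm_mul, sq]
    exact mul_le_mul (hpoch_le_norm _ (by rw [norm_mul, hz, mul_one]))
      (hpoch_le_norm _ (by rw [norm_mul, norm_inv, hz, inv_one, mul_one])) hpoch_nonneg
      (norm_nonneg _)
end

section
/- F(Ã,C̃) converges to 3/2 as Ã and C̃ tend to infinity jointly: for every ε > 0 there exists M > 0 such that for all Ã ≥ M and C̃ ≥ M, |F(Ã,C̃) − 3/2| < ε. -/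
/-!
Put `w t x = t² / (x² + t²)`, so that `0 ≤ w ≤ 1` and `w t x → 1` as `t → ∞`. Multiplying numerator
and denominator of `F(A, C)` by `A²C²` turns both integrands into `w A x · w C x · e^{-x²/4} xⁿ`, so by
dominated convergence `F(A, C)` tends to `(1/4) · ∫ e^{-x²/4} x⁴ / ∫ e^{-x²/4} x²`. Integrating the
derivative of `x³ e^{-x²/4}` gives `∫ e^{-x²/4} x⁴ = 6 ∫ e^{-x²/4} x²`, hence the limit `3/2`.
-/

/-- `F(Ã,C̃) = (1/4)·(∫ e^{-x²/4} x⁴/((x²+Ã²)(x²+C̃²)) dx)/(∫ e^{-x²/4} x²/((x²+Ã²)(x²+C̃²)) dx)`. -/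
noncomputable def Fint (A C : ℝ) : ℝ :=
  (1 / 4) * (∫ x : ℝ, Real.exp (-x ^ 2 / 4) * x ^ 4 / ((x ^ 2 + A ^ 2) * (x ^ 2 + C ^ 2))) /
    ∫ x : ℝ, Real.exp (-x ^ 2 / 4) * x ^ 2 / ((x ^ 2 + A ^ 2) * (x ^ 2 + C ^ 2))

open MeasureTheory Filter Real Topology

section GaussianMoments

lemma hasDerivAt_pow_succ_mul_exp_neg_mul_sq (b : ℝ) (n : ℕ) (x : ℝ) :
    HasDerivAt (fun x : ℝ => x ^ (n + 1) * exp (-b * x ^ 2))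
      ((n + 1) * (exp (-b * x ^ 2) * x ^ n) - 2 * b * (exp (-b * x ^ 2) * x ^ (n + 2))) x := by
  have hexp := ((hasDerivAt_pow 2 x).const_mul (-b)).exp
  refine ((hasDerivAt_pow (n + 1) x).mul hexp).congr_deriv ?_
  simp only [Nat.add_sub_cancel]
  push_cast
  ring

variable {b : ℝ}

lemma integrable_exp_neg_mul_sq_mul_pow (hb : 0 < b) (n : ℕ) :
    Integrable fun x : ℝ => exp (-b * x ^ 2) * x ^ n := by
  refine (integrable_rpow_mul_exp_neg_mul_sq hb (s := n)
    (neg_one_lt_zero.trans_le n.cast_nonneg)).congr (Eventually.of_forall fun x => ?_)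
  simp only [rpow_natCast, mul_comm]

lemma integral_exp_neg_mul_sq_mul_pow_add_two (hb : 0 < b) (n : ℕ) :
    ∫ x : ℝ, exp (-b * x ^ 2) * x ^ (n + 2) =
      (n + 1) / (2 * b) * ∫ x : ℝ, exp (-b * x ^ 2) * x ^ n := by
  have hn := integrable_exp_neg_mul_sq_mul_pow hb n
  have hn2 := integrable_exp_neg_mul_sq_mul_pow hb (n + 2)
  have hzero := integral_eq_zero_of_hasDerivAt_of_integrable
    (hasDerivAt_pow_succ_mul_exp_neg_mul_sq b n) ((hn.const_mul _).sub (hn2.const_mul _))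
    ((integrable_exp_neg_mul_sq_mul_pow hb (n + 1)).congr
      (Eventually.of_forall fun x => mul_comm _ _))
  rw [integral_sub (hn.const_mul _) (hn2.const_mul _), integral_const_mul, integral_const_mul,
    sub_eq_zero] at hzero
  rw [div_mul_eq_mul_div, eq_div_iff (by positivity)]
  linarith

lemma integral_exp_neg_mul_sq_mul_pow_pos {n : ℕ} (hb : 0 < b) (hn : Even n) :
    0 < ∫ x : ℝ, exp (-b * x ^ 2) * x ^ n := by
  rw [integral_pos_iff_support_of_nonneg (fun x => mul_nonneg (exp_pos _).le (hn.pow_nonneg x))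
    (integrable_exp_neg_mul_sq_mul_pow hb n)]
  have hsupport : Set.Ioi (0 : ℝ) ⊆ Function.support fun x : ℝ => exp (-b * x ^ 2) * x ^ n :=
    fun x (hx : 0 < x) => by simp only [Function.mem_support]; positivity
  calc (0 : ENNReal) < volume (Set.Ioi (0 : ℝ)) := by simp
    _ ≤ _ := measure_mono hsupport

end GaussianMoments

lemma sq_div_sq_add_sq_le_one (x t : ℝ) : t ^ 2 / (x ^ 2 + t ^ 2) ≤ 1 :=
  div_le_one_of_le₀ (by nlinarith [sq_nonneg x]) (by positivity)

lemma tendsto_sq_div_sq_add_sq_atTop (x : ℝ) :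
    Tendsto (fun t : ℝ => t ^ 2 / (x ^ 2 + t ^ 2)) atTop (𝓝 1) := by
  have hden : Tendsto (fun t : ℝ => x ^ 2 + t ^ 2) atTop atTop :=
    tendsto_atTop_add_const_left _ _ (tendsto_pow_atTop two_ne_zero)
  have hlim := (tendsto_const_nhds (x := (1 : ℝ))).sub
    (tendsto_const_nhds (x := x ^ 2).div_atTop hden)
  rw [sub_zero] at hlim
  refine hlim.congr' ?_
  filter_upwards [eventually_gt_atTop 0] with t ht
  field_simp
  ring

lemma tendsto_integral_sq_div_sq_add_sq_mul {μ : Measure ℝ} {g : ℝ → ℝ} (hg : Integrable g μ) :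
    Tendsto
      (fun p : ℝ × ℝ => ∫ x, p.1 ^ 2 / (x ^ 2 + p.1 ^ 2) * (p.2 ^ 2 / (x ^ 2 + p.2 ^ 2)) * g x ∂μ)
      (atTop ×ˢ atTop) (𝓝 (∫ x, g x ∂μ)) := by
  refine tendsto_integral_filter_of_dominated_convergence (fun x => ‖g x‖)
    (Eventually.of_forall fun p => ?_) (Eventually.of_forall fun p => ?_) hg.norm ?_
  · exact (Measurable.aestronglyMeasurable (by fun_prop)).mul hg.aestronglyMeasurable
  · refine ae_of_all _ fun x => ?_
    rw [norm_mul]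
    refine mul_le_of_le_one_left (norm_nonneg _) ?_
    rw [norm_mul, Real.norm_of_nonneg (by positivity), Real.norm_of_nonneg (by positivity)]
    exact mul_le_one₀ (sq_div_sq_add_sq_le_one x _) (by positivity)
      (sq_div_sq_add_sq_le_one x _)
  · refine ae_of_all _ fun x => ?_
    simpa using (((tendsto_sq_div_sq_add_sq_atTop x).comp tendsto_fst).mul
      ((tendsto_sq_div_sq_add_sq_atTop x).comp tendsto_snd)).mul_const (g x)

lemma Fint_eq_div_weighted_integrals {A C : ℝ} (hA : A ≠ 0) (hC : C ≠ 0) :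
    Fint A C =
      1 / 4 * (∫ x : ℝ, A ^ 2 / (x ^ 2 + A ^ 2) * (C ^ 2 / (x ^ 2 + C ^ 2)) *
        (exp (-x ^ 2 / 4) * x ^ 4)) /
      ∫ x : ℝ, A ^ 2 / (x ^ 2 + A ^ 2) * (C ^ 2 / (x ^ 2 + C ^ 2)) * (exp (-x ^ 2 / 4) * x ^ 2) := by
  have hweights (n : ℕ) (x : ℝ) :
      A ^ 2 / (x ^ 2 + A ^ 2) * (C ^ 2 / (x ^ 2 + C ^ 2)) * (exp (-x ^ 2 / 4) * x ^ n) =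
        A ^ 2 * C ^ 2 * (exp (-x ^ 2 / 4) * x ^ n / ((x ^ 2 + A ^ 2) * (x ^ 2 + C ^ 2))) := by
    have : x ^ 2 + A ^ 2 ≠ 0 := by positivity
    have : x ^ 2 + C ^ 2 ≠ 0 := by positivity
    field_simp
  simp only [hweights, integral_const_mul, Fint]
  rw [mul_left_comm, mul_div_mul_left _ _ (by positivity)]

lemma tendsto_Fint : Tendsto (fun p : ℝ × ℝ => Fint p.1 p.2) (atTop ×ˢ atTop) (𝓝 (3 / 2)) := by
  have hgauss (n : ℕ) : (fun x : ℝ => exp (-x ^ 2 / 4) * x ^ n) =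
      fun x => exp (-(1 / 4) * x ^ 2) * x ^ n := by
    ext x
    ring_nf
  have hmoment : ∫ x : ℝ, exp (-x ^ 2 / 4) * x ^ 4 = 6 * ∫ x : ℝ, exp (-x ^ 2 / 4) * x ^ 2 := by
    simp only [hgauss]
    rw [integral_exp_neg_mul_sq_mul_pow_add_two (by norm_num) 2]
    norm_num
  have hpos : 0 < ∫ x : ℝ, exp (-x ^ 2 / 4) * x ^ 2 := by
    simp only [hgauss]
    exact integral_exp_neg_mul_sq_mul_pow_pos (by norm_num) even_two
  have hintegrable (n : ℕ) : Integrable fun x : ℝ => exp (-x ^ 2 / 4) * x ^ n := by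
    rw [hgauss]
    exact integrable_exp_neg_mul_sq_mul_pow (by norm_num) n
  have hlim := ((tendsto_integral_sq_div_sq_add_sq_mul (hintegrable 4)).const_mul (1 / 4)).div
    (tendsto_integral_sq_div_sq_add_sq_mul (hintegrable 2)) hpos.ne'
  have hvalue : 1 / 4 * (∫ x : ℝ, exp (-x ^ 2 / 4) * x ^ 4) / ∫ x : ℝ, exp (-x ^ 2 / 4) * x ^ 2 =
      3 / 2 := by
    rw [hmoment, mul_div_assoc, mul_div_assoc, div_self hpos.ne']
    norm_num
  rw [hvalue] at hlim
  refine hlim.congr' ?_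
  filter_upwards [(eventually_gt_atTop 0).prod_mk (eventually_gt_atTop 0)] with p hp
  exact (Fint_eq_div_weighted_integrals hp.1.ne' hp.2.ne').symm

lemma exists_forall_ge_abs_sub_lt_of_tendsto {f : ℝ → ℝ → ℝ} {L : ℝ}
    (hf : Tendsto (fun p : ℝ × ℝ => f p.1 p.2) (atTop ×ˢ atTop) (𝓝 L)) {ε : ℝ} (hε : 0 < ε) :
    ∃ M > (0 : ℝ), ∀ A C : ℝ, M ≤ A → M ≤ C → |f A C - L| < ε := by
  rw [prod_atTop_atTop_eq] at hf
  obtain ⟨⟨N₁, N₂⟩, hN⟩ := Metric.tendsto_atTop.1 hf ε hε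
  refine ⟨max 1 (max N₁ N₂), by positivity, fun A C hA hC => hN (A, C) ⟨?_, ?_⟩⟩
  · exact (le_max_left _ _).trans ((le_max_right _ _).trans hA)
  · exact (le_max_right _ _).trans ((le_max_right _ _).trans hC)

/-- `F(Ã,C̃) → 3/2` as `Ã, C̃ → ∞` jointly. -/
theorem stmt10 : ∀ ε : ℝ, 0 < ε → ∃ M > (0 : ℝ), ∀ A C : ℝ, M ≤ A → M ≤ C →
    |Fint A C - 3 / 2| < ε :=
  fun _ hε => exists_forall_ge_abs_sub_lt_of_tendsto tendsto_Fint hε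
end

section
/- For every ε ∈ (0,1) there exist constants c₀, C₀, C₁ > 0, depending only on ε, such that for every q ∈ (ε,1), every n ∈ ℤ and every real x > C₁/(1−q): ν^{(n)}({η : η(y) = 1 for some integer y < n − x/(1−q)}) ≤ C₀·e^{−c₀·x} and ν^{(n)}({η : η(y′) = 0 for some integer y′ > n + x/(1−q)}) ≤ C₀·e^{−c₀·x}. -/
open MeasureTheory ProbabilityTheory

/-- `A_n`: configurations `η ∈ {0,1}^ℤ` for which `{i > n : η(i) = 0}` and
`{i ≤ n : η(i) = 1}` are finite sets of equal cardinality. -/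
def blockingSet (n : ℤ) : Set (ℤ → Bool) :=
  {η | {i : ℤ | n < i ∧ η i = false}.Finite ∧ {i : ℤ | i ≤ n ∧ η i = true}.Finite ∧
    {i : ℤ | n < i ∧ η i = false}.ncard = {i : ℤ | i ≤ n ∧ η i = true}.ncard}

/-!
For `y ≤ n < z`, moving the particle at `y` to the hole at `z` keeps a configuration in `A_n`.
As the coordinates are independent, this swap changes the measure of `A_n ∩ {η y = 1, η z = 0}`
by at most the odds ratio `ν(η y = 1) ν(η z = 0) / (ν(η y = 0) ν(η z = 1)) = q ^ (z - y)`.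
On `A_n` a particle at `y ≤ n` forces a hole at some `z > n` and vice versa, so a union bound
over such pairs bounds either tail by `q ^ d / (1 - q)²` with `d ≥ x / (1 - q)`; this is at most
`e^{-x} · e^{x/2}` once `x > 4 / (1 - q)`.
-/

open Function Set

lemma cond_le_of_measure_inter_le {Ω : Type*} [MeasurableSpace Ω] {μ : Measure Ω} {A E : Set Ω}
    (hA : MeasurableSet A) {K : ENNReal} (h : μ (A ∩ E) ≤ K * μ A) : μ[E | A] ≤ K := by
  rw [cond_apply hA]
  calc (μ A)⁻¹ * μ (A ∩ E) ≤ (μ A)⁻¹ * (K * μ A) := by gcongr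
    _ = K * ((μ A)⁻¹ * μ A) := by ring
    _ ≤ K := mul_le_of_le_one_right' (ENNReal.inv_mul_le_one _)

section PairSwap

variable {ι β : Type*} [MeasurableSpace β]

abbrev coordSigma (s : Set ι) : MeasurableSpace (ι → β) :=
  ⨆ i ∈ s, MeasurableSpace.comap (fun η : ι → β => η i) inferInstance

lemma measurable_coord_coordSigma {s : Set ι} {i : ι} (hi : i ∈ s) :
    Measurable[coordSigma s] (fun η : ι → β => η i) :=
  Measurable.of_comap_le (le_iSup₂ (f := fun i _ => MeasurableSpace.comap
    (fun η : ι → β => η i) inferInstance) i hi)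

lemma measurable_update_update_coordSigma_compl [DecidableEq ι] (y z : ι) (a b : β) :
    Measurable[coordSigma ({y, z} : Set ι)ᶜ] (fun η : ι → β => update (update η y a) z b) := by
  refine @measurable_pi_lambda _ _ _ (coordSigma _) _ _ fun i => ?_
  simp only [update_apply]
  split_ifs with hz hy
  · exact measurable_const
  · exact measurable_const
  · exact measurable_coord_coordSigma (by simp [hy, hz])

lemma measurableSet_pair_coordSigma [MeasurableSingletonClass β] (y z : ι) (a b : β) :
    MeasurableSet[coordSigma {y, z}] {η : ι → β | η y = a ∧ η z = b} :=
  (measurable_coord_coordSigma (by simp) (measurableSet_singleton a)).inter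
    (measurable_coord_coordSigma (by simp) (measurableSet_singleton b))

lemma measure_pair_eq_mul [MeasurableSingletonClass β] {ν : Measure (ι → β)}
    (hind : iIndepFun (fun i (η : ι → β) => η i) ν) {y z : ι} (hyz : y ≠ z) (a b : β) :
    ν {η | η y = a ∧ η z = b} = ν {η | η y = a} * ν {η | η z = b} :=
  (hind.indepFun hyz).measure_inter_preimage_eq_mul {a} {b} (measurableSet_singleton a)
    (measurableSet_singleton b)

/-- `A ∩ {η y = a, η z = b}` equals `{η y = a, η z = b} ∩ B`, where `B` only depends on the
coordinates off `{y, z}`, and `{η y = c, η z = d} ∩ B ⊆ A`; independence factorizes both. -/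
theorem measure_inter_pair_mul_le [DecidableEq ι] [MeasurableSingletonClass β]
    {ν : Measure (ι → β)}
    (hind : iIndepFun (fun i (η : ι → β) => η i) ν) {y z : ι} (hyz : y ≠ z) {a b c d : β}
    {A : Set (ι → β)} (hA : MeasurableSet A)
    (hAc : ∀ η ∈ A, η y = a → η z = b → update (update η y c) z d ∈ A) :
    ν (A ∩ {η | η y = a ∧ η z = b}) * ν {η | η y = c ∧ η z = d}
      ≤ ν A * ν {η | η y = a ∧ η z = b} := by
  have hindep : Indep (coordSigma (β := β) {y, z}) (coordSigma ({y, z} : Set ι)ᶜ) ν :=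
    indep_iSup_of_disjoint (fun i => (measurable_pi_apply i).comap_le)
      ((iIndepFun_iff_iIndep _ _ _).mp hind) disjoint_compl_right
  set B := (fun η : ι → β => update (update η y a) z b) ⁻¹' A
  have hB : MeasurableSet[coordSigma ({y, z} : Set ι)ᶜ] B :=
    measurable_update_update_coordSigma_compl y z a b hA
  have hAB : A ∩ {η | η y = a ∧ η z = b} = {η | η y = a ∧ η z = b} ∩ B := by
    ext η
    simp only [mem_inter_iff, mem_ofPred_eq, mem_preimage, B]
    constructor
    · rintro ⟨hη, rfl, rfl⟩
      simpa using hη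
    · rintro ⟨⟨rfl, rfl⟩, hη⟩
      simp_all
  have hBA : {η | η y = c ∧ η z = d} ∩ B ⊆ A := by
    rintro η ⟨⟨rfl, rfl⟩, hη⟩
    convert hAc _ hη (by simp [hyz]) (by simp) using 1
    ext i
    simp only [update_apply]
    split_ifs <;> simp_all
  have hmul := (Indep_iff _ _ _).mp hindep
  calc ν (A ∩ {η | η y = a ∧ η z = b}) * ν {η | η y = c ∧ η z = d}
      = ν ({η | η y = c ∧ η z = d} ∩ B) * ν {η | η y = a ∧ η z = b} := by
        rw [hAB, hmul _ _ (measurableSet_pair_coordSigma y z a b) hB,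
          hmul _ _ (measurableSet_pair_coordSigma y z c d) hB]
        ring
    _ ≤ ν A * ν {η | η y = a ∧ η z = b} := by gcongr

end PairSwap

/-- A configuration in `A_n` is determined by its finitely many holes right of `n` and
particles left of `n`. -/
lemma blockingSet_countable (n : ℤ) : (blockingSet n).Countable := by
  refine (countable_range fun T : Finset ℤ × Finset ℤ => fun i : ℤ =>
    if n < i then decide (i ∉ T.1) else decide (i ∈ T.2)).mono ?_
  rintro η ⟨hfalse, htrue, -⟩
  refine ⟨(hfalse.toFinset, htrue.toFinset), funext fun i => ?_⟩
  by_cases hi : n < i <;> cases h : η i <;> simp [hi, h, le_of_not_gt]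

lemma measurableSet_blockingSet (n : ℤ) : MeasurableSet (blockingSet n) :=
  (blockingSet_countable n).measurableSet

lemma exists_true_iff_exists_false_of_mem_blockingSet {n : ℤ} {η : ℤ → Bool}
    (hη : η ∈ blockingSet n) : (∃ y ≤ n, η y = true) ↔ ∃ z, n < z ∧ η z = false := by
  obtain ⟨hfalse, htrue, hcard⟩ := hη
  calc (∃ y ≤ n, η y = true) ↔ {i : ℤ | i ≤ n ∧ η i = true}.Nonempty := Iff.rfl
    _ ↔ {i : ℤ | n < i ∧ η i = false}.Nonempty := by
      rw [← ncard_pos htrue, ← ncard_pos hfalse, hcard]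
    _ ↔ ∃ z, n < z ∧ η z = false := Iff.rfl

lemma update_mem_blockingSet {n y z : ℤ} (hy : y ≤ n) (hz : n < z) {η : ℤ → Bool}
    (hη : η ∈ blockingSet n) (hηy : η y = true) (hηz : η z = false) :
    update (update η y false) z true ∈ blockingSet n := by
  obtain ⟨hfalse, htrue, hcard⟩ := hη
  have hfalse' : {i : ℤ | n < i ∧ update (update η y false) z true i = false}
      = {i : ℤ | n < i ∧ η i = false} \ {z} := by
    ext i
    simp only [mem_ofPred_eq, mem_sdiff, mem_singleton_iff, update_apply]
    split_ifs <;> simp_all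
  have htrue' : {i : ℤ | i ≤ n ∧ update (update η y false) z true i = true}
      = {i : ℤ | i ≤ n ∧ η i = true} \ {y} := by
    ext i
    simp only [mem_ofPred_eq, mem_sdiff, mem_singleton_iff, update_apply]
    split_ifs <;> simp_all
  refine ⟨hfalse' ▸ hfalse.sdiff, htrue' ▸ htrue.sdiff, ?_⟩
  rw [hfalse', htrue',
    ncard_sdiff_singleton_of_mem (show z ∈ {i : ℤ | n < i ∧ η i = false} from ⟨hz, hηz⟩),
    ncard_sdiff_singleton_of_mem (show y ∈ {i : ℤ | i ≤ n ∧ η i = true} from ⟨hy, hηy⟩), hcard]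

lemma tsum_ofReal_zpow_add_add {q : ℝ} (hq0 : 0 < q) (hq1 : q < 1) (d : ℤ) :
    ∑' p : ℕ × ℕ, ENNReal.ofReal (q ^ (d + p.1 + p.2))
      = ENNReal.ofReal (q ^ d / (1 - q) ^ 2) := by
  have hgeom : ∑' k : ℕ, ENNReal.ofReal q ^ k = ENNReal.ofReal (1 - q)⁻¹ := by
    rw [ENNReal.tsum_geometric, ← ENNReal.ofReal_one, ← ENNReal.ofReal_sub _ hq0.le,
      ENNReal.ofReal_inv_of_pos (by linarith)]
  calc ∑' p : ℕ × ℕ, ENNReal.ofReal (q ^ (d + p.1 + p.2))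
      = ∑' p : ℕ × ℕ,
          ENNReal.ofReal (q ^ d) * ENNReal.ofReal q ^ p.1 * ENNReal.ofReal q ^ p.2 := by
        refine tsum_congr fun p => ?_
        rw [zpow_add₀ hq0.ne', zpow_add₀ hq0.ne', zpow_natCast, zpow_natCast,
          ENNReal.ofReal_mul (by positivity), ENNReal.ofReal_mul (by positivity),
          ENNReal.ofReal_pow hq0.le, ENNReal.ofReal_pow hq0.le]
    _ = ENNReal.ofReal (q ^ d) * ENNReal.ofReal (1 - q)⁻¹ * ENNReal.ofReal (1 - q)⁻¹ := by
        simp_rw [ENNReal.tsum_prod', ENNReal.tsum_mul_left, ENNReal.tsum_mul_right,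
          ENNReal.tsum_mul_left, hgeom]
    _ = ENNReal.ofReal (q ^ d / (1 - q) ^ 2) := by
        rw [← ENNReal.ofReal_mul (by positivity), ← ENNReal.ofReal_mul (by positivity)]
        congr 1
        field_simp

lemma zpow_div_one_sub_sq_le_exp {q : ℝ} (hq0 : 0 < q) (hq1 : q < 1) {x : ℝ}
    (hx : 4 / (1 - q) < x) {d : ℤ} (hd : x / (1 - q) ≤ d) :
    q ^ d / (1 - q) ^ 2 ≤ Real.exp (-(1 / 2) * x) := by
  have hu : 0 < 1 - q := by linarith
  have hd0 : 0 ≤ d := by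
    have : 0 < x / (1 - q) := div_pos ((div_pos (by norm_num) hu).trans hx) hu
    exact_mod_cast this.le.trans hd
  have hqd : q ^ d ≤ Real.exp (-x) := by
    lift d to ℕ using hd0
    calc q ^ (d : ℤ) = q ^ d := zpow_natCast q d
      _ ≤ Real.exp (-(1 - q)) ^ d :=
        pow_le_pow_left₀ hq0.le (by linarith [Real.add_one_le_exp (-(1 - q))]) d
      _ = Real.exp (-((1 - q) * d)) := by rw [← Real.exp_nat_mul]; ring_nf
      _ ≤ Real.exp (-x) := by
        gcongr
        have := (div_le_iff₀ hu).mp hd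
        push_cast at this
        linarith
  have hinv : 1 / (1 - q) ^ 2 ≤ Real.exp (x / 2) :=
    calc 1 / (1 - q) ^ 2 = (1 / (1 - q)) ^ 2 := by rw [one_div_pow]
      _ ≤ Real.exp (1 / (1 - q)) ^ 2 :=
        pow_le_pow_left₀ (by positivity) (by linarith [Real.add_one_le_exp (1 / (1 - q))]) 2
      _ = Real.exp (2 / (1 - q)) := by rw [← Real.exp_nat_mul]; ring_nf
      _ ≤ Real.exp (x / 2) := by
        refine Real.exp_le_exp.mpr ?_
        have : 4 / (1 - q) = 2 * (2 / (1 - q)) := by ring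
        linarith
  calc q ^ d / (1 - q) ^ 2 = q ^ d * (1 / (1 - q) ^ 2) := div_eq_mul_one_div _ _
    _ ≤ Real.exp (-x) * Real.exp (x / 2) :=
      mul_le_mul hqd hinv (by positivity) (Real.exp_pos _).le
    _ = Real.exp (-(1 / 2) * x) := by rw [← Real.exp_add]; ring_nf

section Bernoulli

variable {q : ℝ} {ν : Measure (ℤ → Bool)}

lemma measure_coord_eq_false [IsProbabilityMeasure ν] (hq : 0 < q)
    (hmarg : ∀ x : ℤ, ν {η | η x = true} = ENNReal.ofReal (q ^ (-x) / (1 + q ^ (-x)))) (i : ℤ) :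
    ν {η | η i = false} = ENNReal.ofReal (1 / (1 + q ^ (-i))) := by
  have hcompl : {η : ℤ → Bool | η i = false} = {η | η i = true}ᶜ := by ext; simp
  have hmeas : MeasurableSet {η : ℤ → Bool | η i = true} :=
    (measurable_pi_apply (X := fun _ : ℤ => Bool) i) (measurableSet_singleton true)
  rw [hcompl, prob_compl_eq_one_sub hmeas,
    hmarg, ← ENNReal.ofReal_one, ← ENNReal.ofReal_sub _ (by positivity)]
  congr 1
  field_simp
  ring

lemma odds_ratio_eq (hq : 0 < q) (y z : ℤ) :
    q ^ (-y) / (1 + q ^ (-y)) * (1 / (1 + q ^ (-z)))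
      = q ^ (z - y) * (1 / (1 + q ^ (-y)) * (q ^ (-z) / (1 + q ^ (-z)))) := by
  have hpow : q ^ (z - y) * q ^ (-z) = q ^ (-y) := by
    rw [← zpow_add₀ hq.ne']
    ring_nf
  field_simp
  linear_combination -hpow

lemma cond_blockingSet_pair_le [IsProbabilityMeasure ν] (hq : 0 < q)
    (hind : iIndepFun (fun i (η : ℤ → Bool) => η i) ν)
    (hmarg : ∀ x : ℤ, ν {η | η x = true} = ENNReal.ofReal (q ^ (-x) / (1 + q ^ (-x))))
    {n y z : ℤ} (hy : y ≤ n) (hz : n < z) :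
    ν[{η | η y = true ∧ η z = false} | blockingSet n] ≤ ENNReal.ofReal (q ^ (z - y)) := by
  have hyz : y ≠ z := by omega
  have hswap := measure_inter_pair_mul_le hind hyz (measurableSet_blockingSet n)
    fun η hη hηy hηz => update_mem_blockingSet hy hz hη hηy hηz
  have hratio : ν {η | η y = true ∧ η z = false}
      = ENNReal.ofReal (q ^ (z - y)) * ν {η | η y = false ∧ η z = true} := by
    rw [measure_pair_eq_mul hind hyz, measure_pair_eq_mul hind hyz, hmarg, hmarg,
      measure_coord_eq_false hq hmarg, measure_coord_eq_false hq hmarg,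
      ← ENNReal.ofReal_mul (by positivity), ← ENNReal.ofReal_mul (by positivity),
      ← ENNReal.ofReal_mul (by positivity), odds_ratio_eq hq]
  have hflip_pos : ν {η | η y = false ∧ η z = true} ≠ 0 := by
    rw [measure_pair_eq_mul hind hyz, hmarg, measure_coord_eq_false hq hmarg]
    exact mul_ne_zero (ENNReal.ofReal_pos.mpr (by positivity)).ne'
      (ENNReal.ofReal_pos.mpr (by positivity)).ne'
  refine cond_le_of_measure_inter_le (measurableSet_blockingSet n) ?_
  rw [← ENNReal.mul_le_mul_iff_left hflip_pos (measure_ne_top _ _)]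
  calc _ ≤ ν (blockingSet n) * ν {η | η y = true ∧ η z = false} := hswap
    _ = _ := by rw [hratio]; ring

lemma cond_blockingSet_tail_le [IsProbabilityMeasure ν] (hq0 : 0 < q) (hq1 : q < 1)
    (hind : iIndepFun (fun i (η : ℤ → Bool) => η i) ν)
    (hmarg : ∀ x : ℤ, ν {η | η x = true} = ENNReal.ofReal (q ^ (-x) / (1 + q ^ (-x))))
    {n m m' : ℤ} (hm : m ≤ n) (hm' : n < m') :
    ν[{η | (∃ y ≤ m, η y = true) ∧ ∃ z, m' ≤ z ∧ η z = false} | blockingSet n]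
      ≤ ENNReal.ofReal (q ^ (m' - m) / (1 - q) ^ 2) := by
  have hcover : {η : ℤ → Bool | (∃ y ≤ m, η y = true) ∧ ∃ z, m' ≤ z ∧ η z = false}
      ⊆ ⋃ p : ℕ × ℕ, {η | η (m - p.1) = true ∧ η (m' + p.2) = false} := by
    rintro η ⟨⟨y, hy, hηy⟩, z, hz, hηz⟩
    refine mem_iUnion.mpr ⟨((m - y).toNat, (z - m').toNat), ?_⟩
    simp only [mem_ofPred_eq, Int.toNat_of_nonneg (sub_nonneg.mpr hy),
      Int.toNat_of_nonneg (sub_nonneg.mpr hz), sub_sub_cancel, add_sub_cancel]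
    exact ⟨hηy, hηz⟩
  calc _ ≤ ν[⋃ p : ℕ × ℕ, {η | η (m - p.1) = true ∧ η (m' + p.2) = false} | blockingSet n] :=
        measure_mono hcover
    _ ≤ ∑' p : ℕ × ℕ, ν[{η | η (m - p.1) = true ∧ η (m' + p.2) = false} | blockingSet n] :=
        measure_iUnion_le _
    _ ≤ ∑' p : ℕ × ℕ, ENNReal.ofReal (q ^ (m' - m + p.1 + p.2)) := by
        refine ENNReal.tsum_le_tsum fun p => ?_
        refine (cond_blockingSet_pair_le hq0 hind hmarg (by omega) (by omega)).trans_eq ?_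
        congr 2
        ring
    _ = _ := tsum_ofReal_zpow_add_add hq0 hq1 _

lemma cond_blockingSet_left_tail_le [IsProbabilityMeasure ν] (hq0 : 0 < q) (hq1 : q < 1)
    (hind : iIndepFun (fun i (η : ℤ → Bool) => η i) ν)
    (hmarg : ∀ x : ℤ, ν {η | η x = true} = ENNReal.ofReal (q ^ (-x) / (1 + q ^ (-x))))
    (n : ℤ) {r : ℝ} (hr : 0 ≤ r) :
    ∃ d : ℤ, r ≤ d ∧ ν[{η | ∃ y : ℤ, (y : ℝ) < n - r ∧ η y = true} | blockingSet n]
      ≤ ENNReal.ofReal (q ^ d / (1 - q) ^ 2) := by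
  set m := ⌈(n : ℝ) - r⌉ - 1
  have hm : (m : ℝ) < n - r := by
    have := Int.ceil_lt_add_one ((n : ℝ) - r)
    push_cast [m]
    linarith
  refine ⟨n + 1 - m, by push_cast; linarith, ?_⟩
  rw [← cond_inter_self (measurableSet_blockingSet n)]
  refine (measure_mono ?_).trans (cond_blockingSet_tail_le hq0 hq1 hind hmarg
    (m := m) (m' := n + 1) (by exact_mod_cast (show (m : ℝ) ≤ n by linarith)) (by omega))
  rintro η ⟨hη, y, hy, hηy⟩
  have hyn : y ≤ n := by exact_mod_cast (show (y : ℝ) ≤ n by linarith)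
  obtain ⟨z, hz, hηz⟩ := (exists_true_iff_exists_false_of_mem_blockingSet hη).mp ⟨y, hyn, hηy⟩
  refine ⟨⟨y, ?_, hηy⟩, z, hz, hηz⟩
  have : y < ⌈(n : ℝ) - r⌉ := Int.lt_ceil.mpr hy
  omega

lemma cond_blockingSet_right_tail_le [IsProbabilityMeasure ν] (hq0 : 0 < q) (hq1 : q < 1)
    (hind : iIndepFun (fun i (η : ℤ → Bool) => η i) ν)
    (hmarg : ∀ x : ℤ, ν {η | η x = true} = ENNReal.ofReal (q ^ (-x) / (1 + q ^ (-x))))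
    (n : ℤ) {r : ℝ} (hr : 0 ≤ r) :
    ∃ d : ℤ, r ≤ d ∧ ν[{η | ∃ z : ℤ, n + r < (z : ℝ) ∧ η z = false} | blockingSet n]
      ≤ ENNReal.ofReal (q ^ d / (1 - q) ^ 2) := by
  set m' := ⌊(n : ℝ) + r⌋ + 1
  have hm' : (n : ℝ) + r < m' := by
    have := Int.lt_floor_add_one ((n : ℝ) + r)
    push_cast [m']
    linarith
  refine ⟨m' - n, by push_cast; linarith, ?_⟩
  rw [← cond_inter_self (measurableSet_blockingSet n)]
  refine (measure_mono ?_).trans (cond_blockingSet_tail_le hq0 hq1 hind hmarg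
    (m := n) (m' := m') le_rfl (by exact_mod_cast (show (n : ℝ) < m' by linarith)))
  rintro η ⟨hη, z, hz, hηz⟩
  have hnz : n < z := by exact_mod_cast (show (n : ℝ) < z by linarith)
  obtain ⟨y, hy, hηy⟩ := (exists_true_iff_exists_false_of_mem_blockingSet hη).mpr ⟨z, hnz, hηz⟩
  refine ⟨⟨y, hy, hηy⟩, z, ?_, hηz⟩
  have : ⌊(n : ℝ) + r⌋ < z := Int.floor_lt.mpr hz
  omega

end Bernoulli

theorem stmt15_general (ε : ℝ) (hε0 : 0 < ε) :
    ∃ c₀ > (0 : ℝ), ∃ C₀ > (0 : ℝ), ∃ C₁ > (0 : ℝ), ∀ q : ℝ, ε < q → q < 1 →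
      ∀ ν : Measure (ℤ → Bool), IsProbabilityMeasure ν →
        iIndepFun (fun i (η : ℤ → Bool) => η i) ν →
        (∀ x : ℤ, ν {η | η x = true} = ENNReal.ofReal (q ^ (-x) / (1 + q ^ (-x)))) →
        ∀ n : ℤ, ∀ x : ℝ, C₁ / (1 - q) < x →
          ProbabilityTheory.cond ν (blockingSet n)
              {η | ∃ y : ℤ, (y : ℝ) < (n : ℝ) - x / (1 - q) ∧ η y = true}
              ≤ ENNReal.ofReal (C₀ * Real.exp (-c₀ * x)) ∧
            ProbabilityTheory.cond ν (blockingSet n)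
              {η | ∃ y : ℤ, (n : ℝ) + x / (1 - q) < (y : ℝ) ∧ η y = false}
              ≤ ENNReal.ofReal (C₀ * Real.exp (-c₀ * x)) := by
  refine ⟨1 / 2, by norm_num, 1, one_pos, 4, by norm_num,
    fun q hεq hq1 ν _ hind hmarg n x hx => ?_⟩
  have hq0 : 0 < q := hε0.trans hεq
  have hr : 0 ≤ x / (1 - q) := by
    have hu : 0 < 1 - q := by linarith
    exact div_nonneg ((div_pos (by norm_num) hu).trans hx).le hu.le
  have hdecay : ∀ d : ℤ, x / (1 - q) ≤ d →
      ENNReal.ofReal (q ^ d / (1 - q) ^ 2) ≤ ENNReal.ofReal (1 * Real.exp (-(1 / 2) * x)) :=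
    fun d hd => ENNReal.ofReal_le_ofReal <| by
      rw [one_mul]
      exact zpow_div_one_sub_sq_le_exp hq0 hq1 hx hd
  obtain ⟨d₁, hd₁, hleft⟩ := cond_blockingSet_left_tail_le hq0 hq1 hind hmarg n hr
  obtain ⟨d₂, hd₂, hright⟩ := cond_blockingSet_right_tail_le hq0 hq1 hind hmarg n hr
  exact ⟨hleft.trans (hdecay d₁ hd₁), hright.trans (hdecay d₂ hd₂)⟩

/-- For every `ε ∈ (0,1)` there are constants `c₀, C₀, C₁ > 0` depending only on `ε` such that
for every `q ∈ (ε,1)`, for the product Bernoulli measure `ν̃` with marginals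
`ν̃(η(x)=1) = q^{-x}/(1+q^{-x})`, every `n ∈ ℤ` and every real `x > C₁/(1-q)`, the blocking
measure `ν^{(n)} = ν̃(·|A_n)` satisfies
`ν^{(n)}(∃ y < n - x/(1-q), η(y)=1) ≤ C₀ e^{-c₀ x}` and
`ν^{(n)}(∃ y' > n + x/(1-q), η(y')=0) ≤ C₀ e^{-c₀ x}`. -/
theorem stmt15 (ε : ℝ) (hε0 : 0 < ε) (hε1 : ε < 1) :
    ∃ c₀ > (0 : ℝ), ∃ C₀ > (0 : ℝ), ∃ C₁ > (0 : ℝ), ∀ q : ℝ, ε < q → q < 1 →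
      ∀ ν : Measure (ℤ → Bool), IsProbabilityMeasure ν →
        iIndepFun (fun i (η : ℤ → Bool) => η i) ν →
        (∀ x : ℤ, ν {η | η x = true} = ENNReal.ofReal (q ^ (-x) / (1 + q ^ (-x)))) →
        ∀ n : ℤ, ∀ x : ℝ, C₁ / (1 - q) < x →
          ProbabilityTheory.cond ν (blockingSet n)
              {η | ∃ y : ℤ, (y : ℝ) < (n : ℝ) - x / (1 - q) ∧ η y = true}
              ≤ ENNReal.ofReal (C₀ * Real.exp (-c₀ * x)) ∧
            ProbabilityTheory.cond ν (blockingSet n)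
              {η | ∃ y : ℤ, (n : ℝ) + x / (1 - q) < (y : ℝ) ∧ η y = false}
              ≤ ENNReal.ofReal (C₀ * Real.exp (-c₀ * x)) :=
  stmt15_general ε hε0
end

section
/- For every ε ∈ (0,1) there exists a constant c > 0, depending only on ε, such that for all q ∈ (ε,1) one has ν̃(A₀) ≥ c·(1−q). -/
/-!
Fix a window `n` and let `X` count the zeros of `η` in `{1, …, n}` and `Y` the ones in
`{-n, …, -1}`. A configuration with `η 0 = 0` and `X = Y` which agrees with the step `𝟙_{i > 0}`
outside `[-n, n]` lies in `A₀`.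

The map `η ↦ (i ↦ 1 - η (-i))` preserves `ν̃`, since it carries every marginal to the correct
one. It exchanges `X` and `Y` and flips `η 0`. Hence `X` and `Y` are identically distributed,
and they are independent because they read disjoint sets of coordinates. So
`P(η 0 = 0, X = Y) = P(X = Y) / 2 ≥ ∑ₖ P(X = k)² / 2`. Since `E X ≤ 1 / (1 - q)`, Markov's
inequality puts mass at least `1/2` on `{X < K}` with `K = ⌈2 / (1 - q)⌉`. Cauchy–Schwarz then
gives `∑_{k < K} P(X = k)² ≥ 1 / (4K) ≥ (1 - q) / 12`. Configurations that differ from the step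
outside `[-n, n]` have probability at most `2 qⁿ⁺¹ / (1 - q)`, which is negligible for large `n`.
-/

open MeasureTheory ProbabilityTheory Finset

section Coordinates

variable {ι β γ : Type*} [MeasurableSpace β] [Countable β] [MeasurableSingletonClass β]
  [MeasurableSpace γ] [Nonempty γ]

lemma DependsOn.measurable_of_finset {F : (ι → β) → γ} {S : Finset ι} (hF : DependsOn F S) :
    Measurable F := by
  obtain ⟨g, rfl⟩ := dependsOn_iff_exists_comp.1 hF
  exact (Measurable.of_discrete (f := g)).comp
    (measurable_pi_lambda _ fun i ↦ measurable_pi_apply _)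

lemma ProbabilityTheory.iIndepFun.indepFun_of_dependsOn {δ : Type*} [MeasurableSpace δ]
    [Nonempty δ] {μ : Measure (ι → β)} (hμ : iIndepFun (fun i ω ↦ ω i) μ) {S T : Finset ι}
    (hST : Disjoint S T) {F : (ι → β) → γ} {G : (ι → β) → δ}
    (hF : DependsOn F S) (hG : DependsOn G T) : IndepFun F G μ := by
  obtain ⟨f, rfl⟩ := dependsOn_iff_exists_comp.1 hF
  obtain ⟨g, rfl⟩ := dependsOn_iff_exists_comp.1 hG
  exact (hμ.indepFun_finset S T hST measurable_pi_apply).comp Measurable.of_discrete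
    Measurable.of_discrete

end Coordinates

namespace ProbabilityTheory

variable {Ω α : Type*} [MeasurableSpace Ω] {μ : Measure Ω} [IsFiniteMeasure μ]

lemma IndepFun.sum_measureReal_mul_le_measureReal_eq [MeasurableSpace α]
    [MeasurableSingletonClass α] {X Y : Ω → α} (hX : Measurable X) (hY : Measurable Y)
    (hXY : IndepFun X Y μ) (s : Finset α) :
    ∑ a ∈ s, μ.real (X ⁻¹' {a}) * μ.real (Y ⁻¹' {a}) ≤ μ.real {ω | X ω = Y ω} := by
  have hdisj : Set.PairwiseDisjoint ↑s fun a ↦ X ⁻¹' {a} ∩ Y ⁻¹' {a} :=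
    fun a _ b _ hab ↦ Set.disjoint_left.2 fun ω ha hb ↦ hab (ha.1.symm.trans hb.1)
  calc ∑ a ∈ s, μ.real (X ⁻¹' {a}) * μ.real (Y ⁻¹' {a})
      = μ.real (⋃ a ∈ s, X ⁻¹' {a} ∩ Y ⁻¹' {a}) := by
        rw [measureReal_biUnion_finset hdisj fun a _ ↦
          (hX (measurableSet_singleton a)).inter (hY (measurableSet_singleton a))]
        refine sum_congr rfl fun a _ ↦ ?_
        simp only [measureReal_def, hXY.measure_inter_preimage_eq_mul _ _
          (measurableSet_singleton a) (measurableSet_singleton a), ENNReal.toReal_mul]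
    _ ≤ μ.real {ω | X ω = Y ω} :=
        measureReal_mono (Set.iUnion₂_subset fun a _ ω hω ↦ hω.1.trans hω.2.symm)

end ProbabilityTheory

namespace MeasureTheory

variable {Ω : Type*} [MeasurableSpace Ω] {μ : Measure Ω}

lemma lintegral_card_filter_mem {ι : Type*} (S : Finset ι) {A : ι → Set Ω}
    (hA : ∀ i, MeasurableSet (A i)) [∀ i ω, Decidable (ω ∈ A i)] :
    ∫⁻ ω, (#{i ∈ S | ω ∈ A i} : ENNReal) ∂μ = ∑ i ∈ S, μ (A i) := by
  have hsum (ω : Ω) : (#{i ∈ S | ω ∈ A i} : ENNReal) = ∑ i ∈ S, (A i).indicator 1 ω := by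
    rw [card_filter]
    push_cast
    simp only [Set.indicator_apply, Pi.one_apply]
  simp_rw [hsum]
  rw [lintegral_finsetSum _ fun i _ ↦ measurable_one.indicator (hA i)]
  exact sum_congr rfl fun i _ ↦ lintegral_indicator_one (hA i)

variable [IsFiniteMeasure μ]

lemma natCast_mul_measureReal_le_card_filter_mem_le {ι : Type*} (S : Finset ι)
    {A : ι → Set Ω} (hA : ∀ i, MeasurableSet (A i)) [∀ i ω, Decidable (ω ∈ A i)] (K : ℕ) :
    K * μ.real {ω | K ≤ #{i ∈ S | ω ∈ A i}} ≤ ∑ i ∈ S, μ.real (A i) := by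
  have hmeas : Measurable fun ω ↦ (#{i ∈ S | ω ∈ A i} : ENNReal) := by
    simp_rw [card_filter]
    push_cast
    exact Finset.measurable_sum _ fun i _ ↦
      Measurable.ite (hA i) measurable_const measurable_const
  have h := mul_meas_ge_le_lintegral₀ (μ := μ) hmeas.aemeasurable (K : ENNReal)
  rw [lintegral_card_filter_mem S hA] at h
  have := ENNReal.toReal_mono (ENNReal.sum_ne_top.2 fun i _ ↦ measure_ne_top μ (A i)) h
  simpa [ENNReal.toReal_sum, measureReal_def, Nat.cast_le] using this

lemma sq_measureReal_lt_le_mul_sum_sq {X : Ω → ℕ} (hX : Measurable X) (K : ℕ) :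
    μ.real {ω | X ω < K} ^ 2 ≤ K * ∑ k ∈ range K, μ.real (X ⁻¹' {k}) ^ 2 := by
  have hlt : {ω | X ω < K} = ⋃ k ∈ range K, X ⁻¹' {k} := by ext; simp
  rw [hlt, measureReal_biUnion_finset (fun a _ b _ hab ↦ Set.disjoint_left.2
    fun ω ha hb ↦ hab (ha.symm.trans hb)) fun k _ ↦ hX (measurableSet_singleton k)]
  simpa using sq_sum_le_card_mul_sum_sq (s := range K) (f := fun k ↦ μ.real (X ⁻¹' {k}))

lemma Measure.ext_of_singleton_true {μ μ' : Measure Bool} [IsProbabilityMeasure μ]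
    [IsProbabilityMeasure μ'] (h : μ {true} = μ' {true}) : μ = μ' := by
  refine Measure.ext_of_singleton fun b ↦ ?_
  cases b
  · have hc : ({false} : Set Bool) = {true}ᶜ := by ext b; cases b <;> simp
    rw [hc, measure_compl (measurableSet_singleton _) (measure_ne_top _ _),
      measure_compl (measurableSet_singleton _) (measure_ne_top _ _), h, measure_univ,
      measure_univ]
  · exact h

end MeasureTheory

section Reflection

variable {ι : Type*}

def reflectFlip [Neg ι] (η : ι → Bool) : ι → Bool := fun i ↦ !η (-i)

lemma measurable_reflectFlip [Neg ι] : Measurable (reflectFlip (ι := ι)) :=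
  measurable_pi_lambda _ fun i ↦ (measurable_of_finite not).comp (measurable_pi_apply (-i))

lemma measurePreserving_reflectFlip [InvolutiveNeg ι] {ν : Measure (ι → Bool)}
    [IsProbabilityMeasure ν] (hind : iIndepFun (fun i η ↦ η i) ν)
    (hsymm : ∀ i, ν {η | η (-i) = false} = ν {η | η i = true}) :
    MeasurePreserving reflectFlip ν ν := by
  have hflip : iIndepFun (fun i η ↦ !η (-i)) ν :=
    (hind.precomp neg_injective).comp (fun _ ↦ not) fun _ ↦ measurable_of_finite _
  have hmarg (i : ι) : ν.map (fun η ↦ !η (-i)) = ν.map (fun η ↦ η i) := by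
    have hm : Measurable fun η : ι → Bool ↦ !η (-i) :=
      (measurable_of_finite not).comp (measurable_pi_apply (-i))
    have := Measure.isProbabilityMeasure_map (μ := ν) hm.aemeasurable
    have := Measure.isProbabilityMeasure_map (μ := ν) (measurable_pi_apply i).aemeasurable
    refine Measure.ext_of_singleton_true ?_
    rw [Measure.map_apply hm (measurableSet_singleton _),
      Measure.map_apply (measurable_pi_apply i) (measurableSet_singleton _)]
    simpa [Set.preimage] using hsymm i
  refine ⟨measurable_reflectFlip, ?_⟩
  calc ν.map reflectFlip = Measure.infinitePi fun i ↦ ν.map (fun η ↦ !η (-i)) :=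
        hflip.map_fun_eq_infinitePi_map fun i ↦ measurable_reflectFlip.eval
    _ = Measure.infinitePi fun i ↦ ν.map (fun η ↦ η i) := by simp_rw [hmarg]
    _ = ν := by
        rw [← hind.map_fun_eq_infinitePi_map measurable_pi_apply, Measure.map_id']

end Reflection

section Configurations

def rightZeros (n : ℕ) (η : ℤ → Bool) : ℕ := #((range n).filter fun j : ℕ ↦ η (j + 1) = false)

def leftOnes (n : ℕ) (η : ℤ → Bool) : ℕ := #((range n).filter fun j : ℕ ↦ η (-(j + 1)) = true)

def stepBeyond (n : ℕ) : Set (ℤ → Bool) := {η | ∀ m : ℕ, n < m → η m = true ∧ η (-m) = false}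

@[simp] lemma rightZeros_reflectFlip (n : ℕ) (η : ℤ → Bool) :
    rightZeros n (reflectFlip η) = leftOnes n η := by
  simp [rightZeros, leftOnes, reflectFlip]

@[simp] lemma leftOnes_reflectFlip (n : ℕ) (η : ℤ → Bool) :
    leftOnes n (reflectFlip η) = rightZeros n η := by
  simp [rightZeros, leftOnes, reflectFlip]

lemma dependsOn_rightZeros (n : ℕ) :
    DependsOn (rightZeros n) ↑((range n).image fun j : ℕ ↦ (j + 1 : ℤ)) := fun η η' h ↦ by
  refine congrArg card (filter_congr fun j hj ↦ ?_)
  rw [h _ (mem_coe.2 (mem_image_of_mem _ hj))]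

lemma dependsOn_leftOnes (n : ℕ) :
    DependsOn (leftOnes n) ↑((range n).image fun j : ℕ ↦ (-(j + 1) : ℤ)) := fun η η' h ↦ by
  refine congrArg card (filter_congr fun j hj ↦ ?_)
  rw [h _ (mem_coe.2 (mem_image_of_mem _ hj))]

lemma disjoint_image_succ_image_neg_succ (n : ℕ) :
    Disjoint ((range n).image fun j : ℕ ↦ (j + 1 : ℤ))
      ((range n).image fun j : ℕ ↦ (-(j + 1) : ℤ)) := by
  simp only [disjoint_left, mem_image]
  omega

lemma measurable_rightZeros (n : ℕ) : Measurable (rightZeros n) :=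
  (dependsOn_rightZeros n).measurable_of_finset

lemma measurable_leftOnes (n : ℕ) : Measurable (leftOnes n) :=
  (dependsOn_leftOnes n).measurable_of_finset

lemma compl_stepBeyond_subset (n : ℕ) : (stepBeyond n)ᶜ ⊆
    ⋃ k : ℕ, ({η | η ↑(n + 1 + k) = false} ∪ {η | η (-↑(n + 1 + k)) = true}) := by
  intro η hη
  simp only [stepBeyond, Set.mem_compl_iff, Set.mem_ofPred_eq, not_forall, not_and_or] at hη
  obtain ⟨m, hm, h⟩ := hη
  obtain ⟨k, rfl⟩ : ∃ k, m = n + 1 + k := ⟨m - (n + 1), by omega⟩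
  simp only [Bool.not_eq_true, Bool.not_eq_false] at h
  exact Set.mem_iUnion.2 ⟨k, h⟩

lemma setOf_pos_eq_false_eq_image {n : ℕ} {η : ℤ → Bool} (hη : η ∈ stepBeyond n) :
    {i : ℤ | 0 < i ∧ η i = false} =
      ↑(((range n).filter fun j : ℕ ↦ η (j + 1) = false).image fun j : ℕ ↦ (j + 1 : ℤ)) := by
  ext i
  simp only [Set.mem_ofPred_eq, coe_image, coe_filter, Set.mem_image, mem_range]
  constructor
  · rintro ⟨hi, hfalse⟩
    lift i to ℕ using hi.le
    obtain ⟨j, rfl⟩ := Nat.exists_eq_add_one_of_ne_zero (by omega : i ≠ 0)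
    have hj : j < n := by
      by_contra! h
      rw [(hη (j + 1) (by omega)).1] at hfalse
      exact Bool.false_ne_true hfalse.symm
    exact ⟨j, ⟨hj, by simpa using hfalse⟩, by simp⟩
  · rintro ⟨j, ⟨-, hj⟩, rfl⟩
    exact ⟨by positivity, hj⟩

lemma setOf_nonpos_eq_true_eq_image {n : ℕ} {η : ℤ → Bool} (hη : η ∈ stepBeyond n)
    (h0 : η 0 = false) : {i : ℤ | i ≤ 0 ∧ η i = true} =
      ↑(((range n).filter fun j : ℕ ↦ η (-(j + 1)) = true).image
        fun j : ℕ ↦ (-(j + 1) : ℤ)) := by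
  ext i
  simp only [Set.mem_ofPred_eq, coe_image, coe_filter, Set.mem_image, mem_range]
  constructor
  · rintro ⟨hi, htrue⟩
    obtain ⟨m, rfl⟩ := Int.exists_eq_neg_ofNat hi
    obtain ⟨j, rfl⟩ := Nat.exists_eq_add_one_of_ne_zero (n := m)
      (by rintro rfl; simp [h0] at htrue)
    have hj : j < n := by
      by_contra! h
      rw [(hη (j + 1) (by omega)).2] at htrue
      exact Bool.false_ne_true htrue
    exact ⟨j, ⟨hj, by simpa using htrue⟩, by simp⟩
  · rintro ⟨j, ⟨-, hj⟩, rfl⟩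
    exact ⟨by omega, hj⟩

lemma inter_stepBeyond_subset_blockingSet (n : ℕ) :
    {η | η 0 = false ∧ rightZeros n η = leftOnes n η} ∩ stepBeyond n ⊆ blockingSet 0 := by
  rintro η ⟨⟨h0, hcount⟩, hη⟩
  have hpos := setOf_pos_eq_false_eq_image hη
  have hneg := setOf_nonpos_eq_true_eq_image hη h0
  refine ⟨hpos ▸ finite_toSet _, hneg ▸ finite_toSet _, ?_⟩
  rw [hpos, hneg, Set.ncard_coe_finset, Set.ncard_coe_finset,
    card_image_of_injective _ fun a b h ↦ by simpa using h,
    card_image_of_injective _ fun a b h ↦ by simpa using h]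
  exact hcount

end Configurations

def HasBlockingMarginals (q : ℝ) (ν : Measure (ℤ → Bool)) : Prop :=
  ∀ x : ℤ, ν {η | η x = true} = ENNReal.ofReal (q ^ (-x) / (1 + q ^ (-x)))

section BlockingMeasure

variable {q : ℝ} {ν : Measure (ℤ → Bool)}

lemma HasBlockingMarginals.measure_neg_eq_true (hmarg : HasBlockingMarginals q ν) (x : ℤ) :
    ν {η | η (-x) = true} = ENNReal.ofReal (q ^ x / (1 + q ^ x)) := by
  simpa using hmarg (-x)

lemma measureReal_leftOnes_preimage (hR : MeasurePreserving reflectFlip ν ν) (n : ℕ)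
    (s : Set ℕ) : ν.real (leftOnes n ⁻¹' s) = ν.real (rightZeros n ⁻¹' s) := by
  have h : leftOnes n ⁻¹' s = reflectFlip ⁻¹' (rightZeros n ⁻¹' s) := by ext; simp
  rw [h, measureReal_def, measureReal_def, hR.measure_preimage
    (measurable_rightZeros n MeasurableSet.of_discrete).nullMeasurableSet]

variable [IsProbabilityMeasure ν]

lemma HasBlockingMarginals.measure_eq_false (hmarg : HasBlockingMarginals q ν) (hq : 0 < q)
    (x : ℤ) : ν {η | η x = false} = ENNReal.ofReal (q ^ x / (1 + q ^ x)) := by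
  have hc : {η : ℤ → Bool | η x = false} = {η | η x = true}ᶜ := by ext η; simp
  have hx : 0 < q ^ x := zpow_pos hq x
  rw [hc, measure_compl (measurableSet_eq_fun (measurable_pi_apply x) measurable_const)
    (measure_ne_top _ _), hmarg, measure_univ, ← ENNReal.ofReal_one,
    ← ENNReal.ofReal_sub _ (by positivity), zpow_neg]
  congr 1
  field_simp
  ring

lemma HasBlockingMarginals.measureReal_eq_false_le (hmarg : HasBlockingMarginals q ν)
    (hq : 0 < q) (x : ℤ) : ν.real {η | η x = false} ≤ q ^ x := by
  have hx : 0 < q ^ x := zpow_pos hq x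
  rw [measureReal_def, hmarg.measure_eq_false hq, ENNReal.toReal_ofReal (by positivity)]
  exact div_le_self hx.le (by linarith)

lemma HasBlockingMarginals.measurePreserving_reflectFlip (hmarg : HasBlockingMarginals q ν)
    (hq : 0 < q) (hind : iIndepFun (fun i η ↦ η i) ν) : MeasurePreserving reflectFlip ν ν :=
  _root_.measurePreserving_reflectFlip hind fun i ↦ by rw [hmarg.measure_eq_false hq, hmarg]

lemma measureReal_zero_eq_false_and_eq (hR : MeasurePreserving reflectFlip ν ν) (n : ℕ) :
    ν.real {η | η 0 = false ∧ rightZeros n η = leftOnes n η} =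
      ν.real {η | rightZeros n η = leftOnes n η} / 2 := by
  have hmeas (b : Bool) :
      MeasurableSet {η : ℤ → Bool | η 0 = b ∧ rightZeros n η = leftOnes n η} :=
    (measurableSet_eq_fun (measurable_pi_apply 0) measurable_const).inter
      (measurableSet_eq_fun (measurable_rightZeros n) (measurable_leftOnes n))
  have hswap : reflectFlip ⁻¹' {η | η 0 = true ∧ rightZeros n η = leftOnes n η} =
      {η | η 0 = false ∧ rightZeros n η = leftOnes n η} := by
    ext η
    simp only [Set.mem_preimage, Set.mem_ofPred_eq, rightZeros_reflectFlip,
      leftOnes_reflectFlip]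
    constructor <;> rintro ⟨h0, h⟩ <;> exact ⟨by simpa [reflectFlip] using h0, h.symm⟩
  have hsplit : {η : ℤ → Bool | rightZeros n η = leftOnes n η} =
      {η | η 0 = false ∧ rightZeros n η = leftOnes n η} ∪
        {η | η 0 = true ∧ rightZeros n η = leftOnes n η} := by
    ext η
    cases h : η 0 <;> simp [h]
  have hdisj : Disjoint {η : ℤ → Bool | η 0 = false ∧ rightZeros n η = leftOnes n η}
      {η | η 0 = true ∧ rightZeros n η = leftOnes n η} :=
    Set.disjoint_left.2 fun η h h' ↦ by simp [h.1] at h'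
  have hsymm : ν.real {η | η 0 = true ∧ rightZeros n η = leftOnes n η} =
      ν.real {η | η 0 = false ∧ rightZeros n η = leftOnes n η} := by
    rw [← hswap, measureReal_def, measureReal_def,
      hR.measure_preimage (hmeas true).nullMeasurableSet]
  rw [hsplit, measureReal_union hdisj (hmeas true), hsymm]
  ring

lemma sum_sq_measureReal_rightZeros_le (hind : iIndepFun (fun i η ↦ η i) ν)
    (hR : MeasurePreserving reflectFlip ν ν) (n K : ℕ) :
    ∑ k ∈ range K, ν.real (rightZeros n ⁻¹' {k}) ^ 2 ≤
      ν.real {η | rightZeros n η = leftOnes n η} := by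
  have hXY : IndepFun (rightZeros n) (leftOnes n) ν :=
    hind.indepFun_of_dependsOn (disjoint_image_succ_image_neg_succ n) (dependsOn_rightZeros n)
      (dependsOn_leftOnes n)
  have := hXY.sum_measureReal_mul_le_measureReal_eq (measurable_rightZeros n)
    (measurable_leftOnes n) (range K)
  simpa only [measureReal_leftOnes_preimage hR, sq] using this

lemma HasBlockingMarginals.one_half_le_measureReal_rightZeros_lt
    (hmarg : HasBlockingMarginals q ν) (hq0 : 0 < q) (hq1 : q < 1) (n : ℕ) :
    1 / 2 ≤ ν.real {η | rightZeros n η < ⌈2 / (1 - q)⌉₊} := by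
  set K := ⌈2 / (1 - q)⌉₊
  have h1q : 0 < 1 - q := by linarith
  have hmean : ∑ j ∈ range n, ν.real {η | η (j + 1) = false} ≤ 1 / (1 - q) :=
    calc ∑ j ∈ range n, ν.real {η | η (j + 1) = false} ≤ ∑ j ∈ range n, q ^ j := by
          refine sum_le_sum fun j _ ↦ (hmarg.measureReal_eq_false_le hq0 _).trans ?_
          rw [zpow_add_one₀ hq0.ne', zpow_natCast]
          exact mul_le_of_le_one_right (by positivity) hq1.le
      _ ≤ 1 / (1 - q) := by
          simpa [← range_eq_Ico] using geom_sum_Ico_le_of_lt_one (m := 0) (n := n) hq0.le hq1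
  have hmarkov : (K : ℝ) * ν.real {η | K ≤ rightZeros n η} ≤ 1 / (1 - q) :=
    (natCast_mul_measureReal_le_card_filter_mem_le (range n)
      (A := fun j : ℕ ↦ {η : ℤ → Bool | η (j + 1) = false})
      (fun j ↦ measurableSet_eq_fun (measurable_pi_apply _) measurable_const) K).trans hmean
  have hfar : ν.real {η | K ≤ rightZeros n η} ≤ 1 / 2 := by
    have h2 : 2 / (1 - q) * ν.real {η | K ≤ rightZeros n η} ≤ 1 / (1 - q) :=
      (mul_le_mul_of_nonneg_right (Nat.le_ceil _) measureReal_nonneg).trans hmarkov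
    rw [div_mul_eq_mul_div, div_le_div_iff_of_pos_right h1q] at h2
    linarith
  have hcompl : {η | rightZeros n η < K} = {η | K ≤ rightZeros n η}ᶜ := by ext; simp
  rw [hcompl, measureReal_compl (measurableSet_le measurable_const (measurable_rightZeros n)),
    probReal_univ]
  linarith

lemma HasBlockingMarginals.div_twelve_le_measureReal_rightZeros_eq_leftOnes
    (hmarg : HasBlockingMarginals q ν) (hq0 : 0 < q) (hq1 : q < 1)
    (hind : iIndepFun (fun i η ↦ η i) ν) (n : ℕ) :
    (1 - q) / 12 ≤ ν.real {η | rightZeros n η = leftOnes n η} := by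
  set K := ⌈2 / (1 - q)⌉₊
  have h1q : 0 < 1 - q := by linarith
  have hK : (K : ℝ) ≤ 3 / (1 - q) := by
    have h : 1 ≤ 1 / (1 - q) := by rw [le_div_iff₀ h1q]; linarith
    calc (K : ℝ) ≤ 2 / (1 - q) + 1 := (Nat.ceil_lt_add_one (by positivity)).le
      _ ≤ 3 / (1 - q) := by
          rw [show (3 : ℝ) / (1 - q) = 2 / (1 - q) + 1 / (1 - q) by ring]
          linarith
  have hnear := hmarg.one_half_le_measureReal_rightZeros_lt hq0 hq1 n
  have hsq := sum_sq_measureReal_rightZeros_le hind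
    (hmarg.measurePreserving_reflectFlip hq0 hind) n K
  have h4 : 1 / 4 ≤ 3 / (1 - q) * ν.real {η | rightZeros n η = leftOnes n η} :=
    calc (1 : ℝ) / 4 ≤ ν.real {η | rightZeros n η < K} ^ 2 := by nlinarith
      _ ≤ K * ∑ k ∈ range K, ν.real (rightZeros n ⁻¹' {k}) ^ 2 :=
        sq_measureReal_lt_le_mul_sum_sq (measurable_rightZeros n) K
      _ ≤ 3 / (1 - q) * ν.real {η | rightZeros n η = leftOnes n η} :=
        mul_le_mul hK hsq (sum_nonneg fun k _ ↦ sq_nonneg _) (by positivity)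
  rw [div_mul_eq_mul_div, le_div_iff₀ h1q] at h4
  linarith

lemma HasBlockingMarginals.measureReal_compl_stepBeyond_le (hmarg : HasBlockingMarginals q ν)
    (hq0 : 0 < q) (hq1 : q < 1) (n : ℕ) :
    ν.real (stepBeyond n)ᶜ ≤ 2 * q ^ (n + 1) / (1 - q) := by
  have hterm (k : ℕ) :
      ν ({η | η ↑(n + 1 + k) = false} ∪ {η | η (-↑(n + 1 + k)) = true}) ≤
        ENNReal.ofReal (2 * q ^ (n + 1) * q ^ k) := by
    refine (measure_union_le _ _).trans ?_
    rw [hmarg.measure_eq_false hq0, hmarg.measure_neg_eq_true,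
      ← ENNReal.ofReal_add (by positivity) (by positivity), zpow_natCast, mul_assoc, ← pow_add]
    refine ENNReal.ofReal_le_ofReal ?_
    have := div_le_self (pow_nonneg hq0.le (n + 1 + k)) (le_add_of_nonneg_right
      (pow_nonneg hq0.le (n + 1 + k)) : (1 : ℝ) ≤ 1 + q ^ (n + 1 + k))
    linarith
  have hgeom : ∑' k : ℕ, ENNReal.ofReal (2 * q ^ (n + 1) * q ^ k) =
      ENNReal.ofReal (2 * q ^ (n + 1) / (1 - q)) := by
    rw [← ENNReal.ofReal_tsum_of_nonneg (fun k ↦ by positivity)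
      ((summable_geometric_of_lt_one hq0.le hq1).mul_left _), tsum_mul_left,
      tsum_geometric_of_lt_one hq0.le hq1, div_eq_mul_inv]
  refine ENNReal.toReal_le_of_le_ofReal (div_nonneg (by positivity) (by linarith)) ?_
  calc ν (stepBeyond n)ᶜ ≤ _ := measure_mono (compl_stepBeyond_subset n)
    _ ≤ _ := measure_iUnion_le _
    _ ≤ _ := ENNReal.tsum_le_tsum hterm
    _ = _ := hgeom

end BlockingMeasure

theorem stmt16_general (ε : ℝ) (hε0 : 0 < ε) :
    ∃ c > (0 : ℝ), ∀ q : ℝ, ε < q → q < 1 →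
      ∀ ν : Measure (ℤ → Bool), IsProbabilityMeasure ν →
        iIndepFun (fun i η => η i) ν →
        (∀ x : ℤ, ν {η | η x = true} = ENNReal.ofReal (q ^ (-x) / (1 + q ^ (-x)))) →
        ENNReal.ofReal (c * (1 - q)) ≤ ν (blockingSet 0) := by
  refine ⟨1 / 48, by norm_num, fun q hεq hq1 ν _ hind (hmarg : HasBlockingMarginals q ν) ↦ ?_⟩
  have hq0 : 0 < q := hε0.trans hεq
  have h1q : 0 < 1 - q := by linarith
  obtain ⟨n, hn⟩ := exists_pow_lt_of_lt_one (show 0 < (1 - q) ^ 2 / 96 by positivity) hq1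
  set E := {η : ℤ → Bool | η 0 = false ∧ rightZeros n η = leftOnes n η}
  have hE : (1 - q) / 24 ≤ ν.real E := by
    rw [measureReal_zero_eq_false_and_eq (hmarg.measurePreserving_reflectFlip hq0 hind)]
    linarith [hmarg.div_twelve_le_measureReal_rightZeros_eq_leftOnes hq0 hq1 hind n]
  have htail : ν.real (stepBeyond n)ᶜ ≤ (1 - q) / 48 := by
    refine (hmarg.measureReal_compl_stepBeyond_le hq0 hq1 n).trans ?_
    rw [div_le_div_iff₀ h1q (by norm_num)]
    have : q ^ (n + 1) ≤ q ^ n := pow_le_pow_of_le_one hq0.le hq1.le n.le_succ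
    nlinarith
  have hsplit : ν.real E ≤ ν.real (E ∩ stepBeyond n) + ν.real (stepBeyond n)ᶜ :=
    (measureReal_mono fun η hη ↦ by by_cases h : η ∈ stepBeyond n <;> simp [*]).trans
      (measureReal_union_le _ _)
  refine ENNReal.ofReal_le_of_le_toReal ?_
  calc 1 / 48 * (1 - q) ≤ ν.real (E ∩ stepBeyond n) := by linarith
    _ ≤ ν.real (blockingSet 0) := measureReal_mono (inter_stepBeyond_subset_blockingSet n)

/-- For every `ε ∈ (0,1)` there is `c > 0` depending only on `ε` such that for all
`q ∈ (ε,1)` the product Bernoulli measure `ν̃` with marginals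
`ν̃(η(x)=1) = q^{-x}/(1+q^{-x})` satisfies `ν̃(A₀) ≥ c (1-q)`. -/
theorem stmt16 (ε : ℝ) (hε0 : 0 < ε) (hε1 : ε < 1) :
    ∃ c > (0 : ℝ), ∀ q : ℝ, ε < q → q < 1 →
      ∀ ν : Measure (ℤ → Bool), IsProbabilityMeasure ν →
        iIndepFun (fun i η => η i) ν →
        (∀ x : ℤ, ν {η | η x = true} = ENNReal.ofReal (q ^ (-x) / (1 + q ^ (-x)))) →
        ENNReal.ofReal (c * (1 - q)) ≤ ν (blockingSet 0) :=
  stmt16_general ε hε0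
end
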